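/- Let B be a unital C*-algebra, A ⊆ B a complex linear subspace, and x ∈ A. Then a * x * c ∈ A for all a, c ∈ A if and only if for every y ∈ B with star y ∈ A and ‖y‖ ≤ 1, there exists z ∈ B with a * z ∈ A for all a ∈ A, such that condition C(x, y, z) holds. -/

import Mathlib

/-- The canonical C*-matrix norm on matrices over a C*-algebra `A`, obtained by viewing an
`m × n` matrix as an operator between the Hilbert C*-modules `A^n` and `A^m` (as in
Mathlib's `CStarMatrix`).  For square matrices this is the unique C*-algebra norm. -/
noncomputable def cstarMatrixNorm {A : Type*} [NonUnitalNormedRing A] [StarRing A]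
    {m n : ℕ} (M : Matrix (Fin m) (Fin n) A) : ℝ :=
  sSup {r : ℝ | ∃ v : Fin n → A, ‖∑ i, star (v i) * v i‖ ≤ 1 ∧
    r = Real.sqrt ‖∑ j, star (M.mulVec v j) * M.mulVec v j‖}

/-- Condition C(x, y, z) of Section 6: for every `b ∈ B`, the 2×4 matrix over `B` with rows
`(0, y, 1, 0)` and `(2·1, x, z, b)` has the same norm as the row matrix `(2·1, x, z, b)`. -/
def CondC {B : Type*} [NormedRing B] [StarRing B] (x y z : B) : Prop :=
  ∀ b : B, cstarMatrixNorm !![0, y, 1, 0; 2, x, z, b] = cstarMatrixNorm !![(2 : B), x, z, b]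

/-!
For a contraction `y`, condition `C(x, y, z)` holds exactly for `z = -x y*`. With this `z`,
`A z ⊆ A` says `A x y* ⊆ A`, and scaling `c ∈ A` to the contraction `y = c* / (‖c‖ + 1)` turns
this into `A x A ⊆ A`.

The norm of a matrix `N` over `B` is controlled by its Gram matrix `N Nᴴ`. For `z = -x y*` the two
rows of the 2×4 matrix are orthogonal, so its Gram matrix is diagonal with entries
`y y* + 1 ≤ Q = 4 + x x* + z z* + b b*`, and both matrices in `C(x, y, z)` have norm `‖Q‖^(1/2)`.
Conversely, choose `b` with `Q = μ • 1`, `μ = ‖4 + x x* + z z*‖`. Then `C(x, y, z)` bounds the norm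
of the 2×4 matrix by `√μ`; evaluating its Gram form at `(t c*, 1)`, `c = y x* + z*`, gives
`μ + 2t‖c‖² ≤ μ (1 + t²‖c‖²)` for all `t > 0`, hence `c = 0`.
-/

open WithCStarModule CStarModule InnerProductSpace
open scoped Matrix

namespace CStarMatrix

variable {m n A : Type*} [Fintype n]

section NonUnital

variable [NonUnitalCStarAlgebra A]

lemma toCLM_ofMatrix_conjTranspose_star (M : Matrix m n A) (v : n → A) :
    toCLM (ofMatrix Mᴴ) ((equiv A _).symm (star v)) = (equiv A _).symm (star (M *ᵥ v)) := by
  rw [toCLM_apply, Matrix.star_mulVec]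
  rfl

variable [Fintype m] [PartialOrder A] [StarOrderedRing A]

lemma norm_ofMatrix_conjTranspose_le (M : Matrix m n A) : ‖ofMatrix Mᴴ‖ ≤ ‖ofMatrix M‖ := by
  refine norm_le_of_forall_inner_le (C := ‖ofMatrix M‖₊) fun v w => ?_
  calc ‖⟪w, toCLM (ofMatrix Mᴴ) v⟫_A‖ = ‖⟪toCLM (ofMatrix M) w, v⟫_A‖ :=
        congrArg norm inner_toCLM_conjTranspose_right
    _ ≤ ‖toCLM (ofMatrix M) w‖ * ‖v‖ := norm_inner_le _
    _ ≤ ‖ofMatrix M‖ * ‖w‖ * ‖v‖ := by gcongr; exact (toCLM (ofMatrix M)).le_opNorm w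
    _ = ‖ofMatrix M‖₊ * ‖v‖ * ‖w‖ := by rw [coe_nnnorm]; ring

lemma norm_ofMatrix_conjTranspose (M : Matrix m n A) : ‖ofMatrix Mᴴ‖ = ‖ofMatrix M‖ :=
  le_antisymm (norm_ofMatrix_conjTranspose_le M) (by simpa using norm_ofMatrix_conjTranspose_le Mᴴ)

lemma inner_self_eq_dotProduct (w : C⋆ᵐᵒᵈ(A, m → A)) :
    ⟪w, w⟫_A = equiv A _ w ⬝ᵥ star (equiv A _ w) := by
  simp [pi_inner, inner_def, dotProduct]

lemma inner_toCLM_self (N : Matrix m n A) (w : C⋆ᵐᵒᵈ(A, m → A)) :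
    ⟪toCLM (ofMatrix N) w, toCLM (ofMatrix N) w⟫_A =
      equiv A _ w ᵥ* (N * Nᴴ) ⬝ᵥ star (equiv A _ w) := by
  rw [inner_self_eq_dotProduct, toCLM_apply]
  change equiv A _ w ᵥ* N ⬝ᵥ star (equiv A _ w ᵥ* N) = _
  rw [Matrix.star_vecMul, Matrix.dotProduct_mulVec, Matrix.vecMul_vecMul]

lemma norm_dotProduct_mul_conjTranspose_le {N : Matrix m n A} {K : ℝ} (hK : 0 ≤ K)
    (hN : ‖ofMatrix N‖ ≤ √K) (v : m → A) :
    ‖v ᵥ* (N * Nᴴ) ⬝ᵥ star v‖ ≤ K * ‖v ⬝ᵥ star v‖ := by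
  set w : C⋆ᵐᵒᵈ(A, m → A) := (equiv A _).symm v
  calc ‖v ᵥ* (N * Nᴴ) ⬝ᵥ star v‖ = ‖toCLM (ofMatrix N) w‖ ^ 2 := by
        rw [norm_sq_eq A, inner_toCLM_self]; rfl
    _ ≤ (√K * ‖w‖) ^ 2 := by
        gcongr
        exact ((toCLM (ofMatrix N)).le_opNorm w).trans (by gcongr; exact hN)
    _ = K * ‖v ⬝ᵥ star v‖ := by
        rw [mul_pow, Real.sq_sqrt hK, norm_sq_eq A, inner_self_eq_dotProduct]; rfl

end NonUnital

variable [Fintype m] [DecidableEq m] [CStarAlgebra A] [PartialOrder A] [StarOrderedRing A]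

lemma norm_ofMatrix_le_of_mul_conjTranspose_eq_diagonal {N : Matrix m n A} {d : m → A} {K : ℝ}
    (hK : 0 ≤ K) (hN : N * Nᴴ = Matrix.diagonal d) (hd : ∀ i, d i ≤ algebraMap ℝ A K) :
    ‖ofMatrix N‖ ≤ √K := by
  refine (toCLM (ofMatrix N)).opNorm_le_bound (Real.sqrt_nonneg K) fun w => ?_
  have hle : ⟪toCLM (ofMatrix N) w, toCLM (ofMatrix N) w⟫_A ≤ K • ⟪w, w⟫_A := by
    rw [inner_toCLM_self, inner_self_eq_dotProduct, hN]
    simp only [Matrix.vecMul_diagonal, dotProduct, Finset.smul_sum]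
    refine Finset.sum_le_sum fun i _ => ?_
    simpa [Algebra.algebraMap_eq_smul_one] using star_right_conjugate_le_conjugate (hd i) _
  refine (pow_le_pow_iff_left₀ (norm_nonneg _) (by positivity) two_ne_zero).mp ?_
  calc ‖toCLM (ofMatrix N) w‖ ^ 2 = ‖⟪toCLM (ofMatrix N) w, toCLM (ofMatrix N) w⟫_A‖ :=
        norm_sq_eq A
    _ ≤ ‖K • ⟪w, w⟫_A‖ := CStarAlgebra.norm_le_norm_of_nonneg_of_le inner_self_nonneg hle
    _ = (√K * ‖w‖) ^ 2 := by
        rw [norm_smul, Real.norm_of_nonneg hK, ← norm_sq_eq A, mul_pow, Real.sq_sqrt hK]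

lemma sqrt_norm_mul_conjTranspose_apply_self_le (N : Matrix m n A) (i : m) :
    √‖(N * Nᴴ) i i‖ ≤ ‖ofMatrix N‖ := by
  nontriviality A
  set w : C⋆ᵐᵒᵈ(A, m → A) := (equiv A _).symm (Pi.single i 1)
  have hw : ‖w‖ = 1 := by simp [w]
  have hTw : ‖toCLM (ofMatrix N) w‖ = √‖(N * Nᴴ) i i‖ := by
    rw [norm_eq_sqrt_norm_inner_self (A := A), inner_toCLM_self]
    simp [w, dotProduct_single]
  simpa [hw, hTw, norm_def] using (toCLM (ofMatrix N)).le_opNorm w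

lemma norm_ofMatrix_eq_of_mul_conjTranspose_eq_diagonal {N : Matrix m n A} {d : m → A}
    (hN : N * Nᴴ = Matrix.diagonal d) (i₀ : m) (hd : ∀ i, d i ≤ d i₀) :
    ‖ofMatrix N‖ = √‖d i₀‖ := by
  have hsa : IsSelfAdjoint (d i₀) := isSelfAdjoint_iff.mpr <| by
    simpa [hN] using (Matrix.isHermitian_mul_conjTranspose_self N).apply i₀ i₀
  refine le_antisymm ?_ (by simpa [hN] using sqrt_norm_mul_conjTranspose_apply_self_le N i₀)
  exact norm_ofMatrix_le_of_mul_conjTranspose_eq_diagonal (norm_nonneg _) hN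
    fun i => (hd i).trans hsa.le_algebraMap_norm_self

end CStarMatrix

open CStarMatrix

section cstarMatrixNorm

variable {B : Type*} [NonUnitalCStarAlgebra B] [PartialOrder B] [StarOrderedRing B]

lemma norm_equiv_symm_star {n : ℕ} (v : Fin n → B) :
    ‖(equiv B (Fin n → B)).symm (star v)‖ = √‖∑ i, star (v i) * v i‖ := by
  simp [pi_norm, inner_def]

/- `cstarMatrixNorm` lets `M` act on columns from the left, `CStarMatrix` acts on rows from the
right; `star` exchanges the two pictures, at the price of replacing `M` by `Mᴴ`. -/
lemma cstarMatrixNorm_eq_norm {m n : ℕ} (M : Matrix (Fin m) (Fin n) B) :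
    cstarMatrixNorm M = ‖ofMatrix M‖ := by
  have hM (v : Fin n → B) : ‖toCLM (ofMatrix Mᴴ) ((equiv B _).symm (star v))‖ =
      √‖∑ j, star ((M *ᵥ v) j) * (M *ᵥ v) j‖ := by
    rw [toCLM_ofMatrix_conjTranspose_star, norm_equiv_symm_star]
  rw [← norm_ofMatrix_conjTranspose, norm_def, ← ContinuousLinearMap.sSup_unitClosedBall_eq_norm]
  refine congrArg sSup (Set.ext fun r => ⟨?_, ?_⟩)
  · rintro ⟨v, hv, rfl⟩
    exact ⟨(equiv B _).symm (star v), by simpa [norm_equiv_symm_star] using hv, hM v⟩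
  · rintro ⟨u, hu, rfl⟩
    obtain ⟨v, rfl⟩ : ∃ v, u = (equiv B _).symm (star v) := ⟨star (equiv B _ u), by simp⟩
    exact ⟨v, by simpa [norm_equiv_symm_star] using hu, hM v⟩

end cstarMatrixNorm

section CStarAlgebra

variable {B : Type*} [CStarAlgebra B] [PartialOrder B] [StarOrderedRing B]

lemma norm_algebraMap_add_of_nonneg [Nontrivial B] {r : ℝ} (hr : 0 ≤ r) {a : B} (ha : 0 ≤ a) :
    ‖algebraMap ℝ B r + a‖ = r + ‖a‖ := by
  refine le_antisymm ((norm_add_le _ _).trans_eq ?_) ?_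
  · rw [norm_algebraMap', Real.norm_of_nonneg hr]
  have hmem : r + ‖a‖ ∈ spectrum ℝ (algebraMap ℝ B r + a) := by
    rw [← spectrum.singleton_add_eq]
    exact Set.add_mem_add rfl (CStarAlgebra.norm_mem_spectrum_of_nonneg ha)
  simpa [abs_of_nonneg (add_nonneg hr (norm_nonneg a))] using spectrum.norm_le_norm_of_mem hmem

lemma exists_add_mul_star_eq_algebraMap_norm {a : B} (ha : 0 ≤ a) :
    ∃ b : B, a + b * star b = algebraMap ℝ B ‖a‖ := by
  have hle : 0 ≤ algebraMap ℝ B ‖a‖ - a := sub_nonneg.mpr IsSelfAdjoint.le_algebraMap_norm_self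
  refine ⟨CFC.sqrt (algebraMap ℝ B ‖a‖ - a), ?_⟩
  rw [(CFC.sqrt_nonneg _).star_eq, CFC.sqrt_mul_sqrt_self _ hle, add_sub_cancel]

lemma eq_zero_of_forall_norm_le {S K : B} {μ : ℝ} (hμ : 0 ≤ μ) (hS : 0 ≤ S) (hK : 0 ≤ K)
    (h : ∀ t : ℝ, 0 < t →
      ‖algebraMap ℝ B μ + (2 * t) • S + t ^ 2 • K‖ ≤ μ * ‖1 + t ^ 2 • S‖) :
    S = 0 := by
  nontriviality B
  have key (t : ℝ) (ht : 0 < t) : 2 * t * ‖S‖ ≤ μ * t ^ 2 * ‖S‖ := by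
    have hS' : 0 ≤ (2 * t) • S := smul_nonneg (by positivity) hS
    have hK' : 0 ≤ t ^ 2 • K := smul_nonneg (by positivity) hK
    suffices μ + 2 * t * ‖S‖ ≤ μ + μ * t ^ 2 * ‖S‖ by linarith
    calc μ + 2 * t * ‖S‖ = ‖algebraMap ℝ B μ + (2 * t) • S‖ := by
          rw [norm_algebraMap_add_of_nonneg hμ hS', norm_smul, Real.norm_of_nonneg (by positivity)]
      _ ≤ ‖algebraMap ℝ B μ + (2 * t) • S + t ^ 2 • K‖ :=
          CStarAlgebra.norm_le_norm_of_nonneg_of_le (add_nonneg (algebraMap_nonneg B hμ) hS')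
            (le_add_of_nonneg_right hK')
      _ ≤ μ * ‖1 + t ^ 2 • S‖ := h t ht
      _ ≤ μ * (1 + t ^ 2 * ‖S‖) := by
          gcongr
          refine (norm_add_le _ _).trans_eq ?_
          rw [norm_one, norm_smul, Real.norm_of_nonneg (by positivity)]
      _ = μ + μ * t ^ 2 * ‖S‖ := by ring
  have hsmall := key (μ + 2)⁻¹ (by positivity)
  have hS0 : ‖S‖ = 0 := by
    field_simp at hsmall
    nlinarith [norm_nonneg S]
  exact norm_eq_zero.mp hS0

end CStarAlgebra

section CondC

variable {B : Type*} [CStarAlgebra B]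

lemma mul_conjTranspose_row (x z b : B) :
    !![(2 : B), x, z, b] * (!![(2 : B), x, z, b])ᴴ =
      Matrix.diagonal ![4 + x * star x + z * star z + b * star b] := by
  ext i j
  fin_cases i; fin_cases j
  simp [Matrix.mul_apply, Fin.sum_univ_four, (by norm_num : (2 : B) * 2 = 4)]

lemma mul_conjTranspose_twoRow (x y z b : B) :
    !![0, y, 1, 0; 2, x, z, b] * (!![0, y, 1, 0; 2, x, z, b])ᴴ =
      !![y * star y + 1, y * star x + star z;
        x * star y + z, 4 + x * star x + z * star z + b * star b] := by
  ext i j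
  fin_cases i <;> fin_cases j <;>
    simp [Matrix.mul_apply, Fin.sum_univ_four, (by norm_num : (2 : B) * 2 = 4)]

lemma vecMul_dotProduct_star_fin_two (c P : B) (μ t : ℝ) :
    ![t • star c, 1] ᵥ* !![P, c; star c, algebraMap ℝ B μ] ⬝ᵥ star ![t • star c, 1] =
      algebraMap ℝ B μ + (2 * t) • (star c * c) + t ^ 2 • (star c * P * c) := by
  simp only [dotProduct, Matrix.vecMul, Matrix.of_apply, Matrix.cons_val', Matrix.cons_val_fin_one,
    Fin.sum_univ_two, Matrix.cons_val_zero, Matrix.cons_val_one, Pi.star_apply, add_mul, one_mul,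
    mul_one, star_smul, star_trivial, star_star, star_one, Algebra.smul_mul_assoc,
    Algebra.mul_smul_comm, smul_smul]
  module

lemma dotProduct_star_fin_two (c : B) (t : ℝ) :
    ![t • star c, 1] ⬝ᵥ star ![t • star c, 1] = 1 + t ^ 2 • (star c * c) := by
  simp only [dotProduct, Pi.star_apply, Fin.sum_univ_two, Matrix.cons_val_zero, Matrix.cons_val_one,
    Matrix.cons_val_fin_one, star_smul, star_trivial, star_star, star_one, mul_one,
    Algebra.mul_smul_comm, Algebra.smul_mul_assoc, smul_smul]
  module

lemma condC_neg_mul_star {x y : B} (hy : ‖y‖ ≤ 1) : CondC x y (-(x * star y)) := by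
  let := CStarAlgebra.spectralOrder B
  have := CStarAlgebra.spectralOrderedRing B
  intro b
  set z := -(x * star y)
  set Q := 4 + x * star x + z * star z + b * star b
  have hyy : y * star y ≤ 1 := by
    rw [← CStarAlgebra.norm_le_one_iff_of_nonneg _ (mul_star_self_nonneg y),
      CStarRing.norm_self_mul_star]
    nlinarith [norm_nonneg y]
  have hPQ : y * star y + 1 ≤ Q := calc
    y * star y + 1 ≤ 2 := by simpa [one_add_one_eq_two] using add_le_add_left hyy 1
    _ ≤ 2 + (2 + x * star x + z * star z + b * star b) := by
        have := mul_star_self_nonneg x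
        have := mul_star_self_nonneg z
        have := mul_star_self_nonneg b
        have := zero_le_two (α := B)
        exact le_add_of_nonneg_right (by positivity)
    _ = Q := by rw [← add_assoc, ← add_assoc, ← add_assoc, two_add_two_eq_four]
  have hM : !![0, y, 1, 0; 2, x, z, b] * (!![0, y, 1, 0; 2, x, z, b])ᴴ =
      Matrix.diagonal ![y * star y + 1, Q] := by
    rw [mul_conjTranspose_twoRow, Matrix.diagonal_vec2]
    simp [z, Q]
  rw [cstarMatrixNorm_eq_norm, cstarMatrixNorm_eq_norm,
    norm_ofMatrix_eq_of_mul_conjTranspose_eq_diagonal hM 1 (Fin.forall_fin_two.mpr ⟨hPQ, le_rfl⟩),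
    norm_ofMatrix_eq_of_mul_conjTranspose_eq_diagonal (mul_conjTranspose_row x z b) 0
      (Fin.forall_fin_one.mpr le_rfl)]
  rfl

lemma eq_neg_mul_star_of_condC {x y z : B} (h : CondC x y z) : z = -(x * star y) := by
  let := CStarAlgebra.spectralOrder B
  have := CStarAlgebra.spectralOrderedRing B
  set a := 4 + x * star x + z * star z
  have ha : 0 ≤ a := by
    have := mul_star_self_nonneg x
    have := mul_star_self_nonneg z
    have := zero_le_four (α := B)
    positivity
  obtain ⟨b, hb⟩ := exists_add_mul_star_eq_algebraMap_norm ha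
  have hR : ‖ofMatrix !![(2 : B), x, z, b]‖ ≤ √‖a‖ :=
    norm_ofMatrix_le_of_mul_conjTranspose_eq_diagonal (norm_nonneg a) (mul_conjTranspose_row x z b)
      (Fin.forall_fin_one.mpr hb.le)
  have hM : ‖ofMatrix !![0, y, 1, 0; 2, x, z, b]‖ ≤ √‖a‖ := by
    rwa [← cstarMatrixNorm_eq_norm, h b, cstarMatrixNorm_eq_norm]
  set c := y * star x + star z
  have hsc : x * star y + z = star c := by simp [c]
  have hc : star c * c = 0 := by
    refine eq_zero_of_forall_norm_le (norm_nonneg a) (star_mul_self_nonneg c)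
      (star_left_conjugate_nonneg (add_nonneg (mul_star_self_nonneg y) zero_le_one) c)
      fun t _ => ?_
    have := norm_dotProduct_mul_conjTranspose_le (norm_nonneg a) hM ![t • star c, 1]
    rwa [mul_conjTranspose_twoRow, hsc, hb, vecMul_dotProduct_star_fin_two,
      dotProduct_star_fin_two] at this
  have hz : star z = -(y * star x) :=
    eq_neg_of_add_eq_zero_right ((CStarRing.star_mul_self_eq_zero_iff c).mp hc)
  simpa using congrArg star hz

end CondC

theorem quasi_mult_iff_general {B : Type*} [CStarAlgebra B] (A : Submodule ℂ B) (x : B) :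
    (∀ a ∈ A, ∀ c ∈ A, a * x * c ∈ A) ↔
      (∀ y : B, star y ∈ A → ‖y‖ ≤ 1 →
        ∃ z : B, (∀ a ∈ A, a * z ∈ A) ∧ CondC x y z) := by
  refine ⟨fun h y hy hy1 => ⟨-(x * star y), fun a ha => ?_, condC_neg_mul_star hy1⟩,
    fun h a ha c hc => ?_⟩
  · simpa [mul_assoc] using A.neg_mem (h a ha _ hy)
  · set r : ℝ := ‖c‖ + 1
    have hr : 0 < r := by positivity
    have hy1 : ‖r⁻¹ • star c‖ ≤ 1 := by
      rw [norm_smul, norm_star, norm_inv, Real.norm_of_nonneg hr.le, inv_mul_le_one₀ hr]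
      linarith
    obtain ⟨z, hzA, hz⟩ := h (r⁻¹ • star c) (by simpa using A.smul_of_tower_mem r⁻¹ hc) hy1
    have hxc : a * x * c = -r • (a * z) := by
      rw [eq_neg_mul_star_of_condC hz]
      simp [smul_smul, hr.ne', mul_assoc]
    rw [hxc]
    exact A.smul_of_tower_mem _ (hzA a ha)

/-- Corollary 6.2 (3): for `x ∈ A`, `A x A ⊆ A` iff for every contraction `y` with `y* ∈ A`
there is `z` with `A z ⊆ A` such that `C(x,y,z)` holds. -/
theorem quasi_mult_iff {B : Type*} [CStarAlgebra B] (A : Submodule ℂ B) (x : B) (hx : x ∈ A) :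
    (∀ a ∈ A, ∀ c ∈ A, a * x * c ∈ A) ↔
      (∀ y : B, star y ∈ A → ‖y‖ ≤ 1 →
        ∃ z : B, (∀ a ∈ A, a * z ∈ A) ∧ CondC x y z) :=
  quasi_mult_iff_general A x
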